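/- arXiv:2308.12483 — 2 statements merged into one kernel-verified Lean document; each statement's English description precedes it below -/
import Mathlib

section
/- Let A and B be positive semidefinite real symmetric n×n matrices with the same kernel. If A ≼ B in the Löwner order, then B⁺ ≼ A⁺, where M⁺ denotes the Moore–Penrose pseudoinverse. -/
open Matrix

/-- `B` is the Moore–Penrose pseudoinverse of `A`. -/
def IsMoorePenrose {n : ℕ} (A B : Matrix (Fin n) (Fin n) ℝ) : Prop :=
  A * B * A = A ∧ B * A * B = B ∧ (A * B)ᵀ = A * B ∧ (B * A)ᵀ = B * A

/-- Löwner order: `A ≼ B`. -/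
def Loewner {n : ℕ} (A B : Matrix (Fin n) (Fin n) ℝ) : Prop := (B - A).PosSemidef

/-!
For positive semidefinite `M` with pseudoinverse `M⁺`, the quadratic form of `M⁺` has the
variational description `x ⬝ M⁺ x = max_y (2 x ⬝ M⁺ M y - y ⬝ M y)`, attained at `y = M⁺ x`.
Since `ker A ⊆ ker B`, the vector `y = B⁺ x` lies in the range of `A`, where `A⁺ A` acts as the
identity, so `x ⬝ B⁺ x = 2 x ⬝ y - y ⬝ B y ≤ 2 x ⬝ y - y ⬝ A y ≤ x ⬝ A⁺ x`.
-/

lemma Matrix.IsSymm.dotProduct_mulVec_comm {ι R : Type*} [Fintype ι] [CommSemiring R]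
    {M : Matrix ι ι R} (hM : M.IsSymm) (v w : ι → R) : v ⬝ᵥ M *ᵥ w = (M *ᵥ v) ⬝ᵥ w := by
  rw [dotProduct_mulVec, ← mulVec_transpose, hM.eq]

namespace IsMoorePenrose

variable {n : ℕ} {A Ap B Bp C : Matrix (Fin n) (Fin n) ℝ}

theorem unique (hB : IsMoorePenrose A B) (hC : IsMoorePenrose A C) : B = C := by
  obtain ⟨hB₁, hB₂, hB₃, hB₄⟩ := hB
  obtain ⟨hC₁, hC₂, hC₃, hC₄⟩ := hC
  have hAB : A * B = A * C := by
    calc A * B = (A * C) * (A * B) := by rw [← Matrix.mul_assoc, hC₁]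
    _ = (A * C)ᵀ * (A * B)ᵀ := by rw [hC₃, hB₃]
    _ = (A * B * A * C)ᵀ := by simp only [transpose_mul, Matrix.mul_assoc]
    _ = A * C := by rw [hB₁, hC₃]
  have hBA : B * A = C * A := by
    calc B * A = (B * A) * (C * A) := by rw [Matrix.mul_assoc, ← Matrix.mul_assoc A, hC₁]
    _ = (B * A)ᵀ * (C * A)ᵀ := by rw [hB₄, hC₄]
    _ = (C * (A * B * A))ᵀ := by simp only [transpose_mul, Matrix.mul_assoc]
    _ = C * A := by rw [hB₁, hC₄]
  calc B = B * A * B := hB₂.symm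
  _ = C * A * C := by rw [Matrix.mul_assoc, hAB, ← Matrix.mul_assoc, hBA]
  _ = C := hC₂

theorem transpose (h : IsMoorePenrose A Ap) : IsMoorePenrose Aᵀ Apᵀ := by
  obtain ⟨h₁, h₂, h₃, h₄⟩ := h
  refine ⟨?_, ?_, ?_, ?_⟩
  · rw [← transpose_mul, ← transpose_mul, ← Matrix.mul_assoc, h₁]
  · rw [← transpose_mul, ← transpose_mul, ← Matrix.mul_assoc, h₂]
  · rw [← transpose_mul, transpose_transpose, h₄]
  · rw [← transpose_mul, transpose_transpose, h₃]

theorem isSymm (hA : A.IsSymm) (h : IsMoorePenrose A Ap) : Ap.IsSymm := by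
  have h' := h.transpose
  rw [hA.eq] at h'
  exact h'.unique h

theorem pinv_mul_mul_eq_of_ker_le (h : IsMoorePenrose A Ap) (hB : B.IsSymm)
    (hker : ∀ x, A *ᵥ x = 0 → B *ᵥ x = 0) : Ap * A * B = B := by
  have hBP : B * (Ap * A) = B := ext_iff_mulVec.2 fun v => by
    have hv : A *ᵥ (v - (Ap * A) *ᵥ v) = 0 := by
      rw [mulVec_sub, mulVec_mulVec, ← Matrix.mul_assoc, h.1, sub_self]
    have hv' := hker _ hv
    rw [mulVec_sub, mulVec_mulVec, sub_eq_zero] at hv'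
    exact hv'.symm
  calc Ap * A * B = (B * (Ap * A))ᵀ := by rw [transpose_mul, h.2.2.2, hB.eq]
  _ = B := by rw [hBP, hB.eq]

theorem pinv_mul_mul_pinv_eq_of_ker_le (h : IsMoorePenrose A Ap) (hB : B.IsSymm)
    (hBp : IsMoorePenrose B Bp) (hker : ∀ x, A *ᵥ x = 0 → B *ᵥ x = 0) : Ap * A * Bp = Bp := by
  have hBp' : B * (Bp * Bp) = Bp := by
    calc B * (Bp * Bp) = (Bp * B)ᵀ * Bp := by
          rw [transpose_mul, hB.eq, (hBp.isSymm hB).eq, Matrix.mul_assoc]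
    _ = Bp := by rw [hBp.2.2.2, hBp.2.1]
  calc Ap * A * Bp = Ap * A * B * (Bp * Bp) := by rw [Matrix.mul_assoc (Ap * A), hBp']
  _ = Bp := by rw [h.pinv_mul_mul_eq_of_ker_le hB hker, hBp']

theorem dotProduct_pinv_mulVec (hA : A.IsSymm) (h : IsMoorePenrose A Ap) (x : Fin n → ℝ) :
    (Ap *ᵥ x) ⬝ᵥ A *ᵥ (Ap *ᵥ x) = x ⬝ᵥ Ap *ᵥ x := by
  rw [← (h.isSymm hA).dotProduct_mulVec_comm, mulVec_mulVec, mulVec_mulVec, h.2.1]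

theorem two_mul_dotProduct_sub_le (hA : A.PosSemidef) (h : IsMoorePenrose A Ap)
    (x y : Fin n → ℝ) : 2 * (x ⬝ᵥ (Ap * A) *ᵥ y) - y ⬝ᵥ A *ᵥ y ≤ x ⬝ᵥ Ap *ᵥ x := by
  have hA' : A.IsSymm := isHermitian_iff_isSymm.1 hA.isHermitian
  set z := Ap *ᵥ x
  have hxy : x ⬝ᵥ (Ap * A) *ᵥ y = z ⬝ᵥ A *ᵥ y := by
    rw [← mulVec_mulVec, (h.isSymm hA').dotProduct_mulVec_comm]
  have hyz : y ⬝ᵥ A *ᵥ z = z ⬝ᵥ A *ᵥ y := by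
    rw [hA'.dotProduct_mulVec_comm, dotProduct_comm]
  have hpos := hA.dotProduct_mulVec_nonneg (z - y)
  simp only [star_trivial, mulVec_sub, dotProduct_sub, sub_dotProduct] at hpos
  rw [← h.dotProduct_pinv_mulVec hA' x, hxy]
  linarith

end IsMoorePenrose

/-- If `A`, `B` are PSD real symmetric matrices with the same kernel and `A ≼ B`, then
`B⁺ ≼ A⁺`. -/
theorem stmt_3 {n : ℕ} (A B Ap Bp : Matrix (Fin n) (Fin n) ℝ)
    (hA : A.PosSemidef) (hB : B.PosSemidef)
    (hker : ∀ x : Fin n → ℝ, A.mulVec x = 0 ↔ B.mulVec x = 0)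
    (hAB : Loewner A B)
    (hAp : IsMoorePenrose A Ap) (hBp : IsMoorePenrose B Bp) :
    Loewner Bp Ap := by
  have hAs : A.IsSymm := isHermitian_iff_isSymm.1 hA.isHermitian
  have hBs : B.IsSymm := isHermitian_iff_isSymm.1 hB.isHermitian
  refine posSemidef_iff_dotProduct_mulVec.2
    ⟨isHermitian_iff_isSymm.2 ((hAp.isSymm hAs).sub (hBp.isSymm hBs)), fun x => ?_⟩
  set y := Bp *ᵥ x
  have hy : (Ap * A) *ᵥ y = y := by
    rw [mulVec_mulVec, hAp.pinv_mul_mul_pinv_eq_of_ker_le hBs hBp fun v => (hker v).1]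
  have hAy : y ⬝ᵥ A *ᵥ y ≤ y ⬝ᵥ B *ᵥ y := by
    have := hAB.dotProduct_mulVec_nonneg y
    simp only [star_trivial, sub_mulVec, dotProduct_sub] at this
    linarith
  have hform : x ⬝ᵥ Bp *ᵥ x ≤ x ⬝ᵥ Ap *ᵥ x := calc
    x ⬝ᵥ Bp *ᵥ x = 2 * (x ⬝ᵥ y) - y ⬝ᵥ B *ᵥ y := by rw [hBp.dotProduct_pinv_mulVec hBs]; ring
    _ ≤ 2 * (x ⬝ᵥ (Ap * A) *ᵥ y) - y ⬝ᵥ A *ᵥ y := by rw [hy]; linarith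
    _ ≤ x ⬝ᵥ Ap *ᵥ x := hAp.two_mul_dotProduct_sub_le hA x y
  simpa only [star_trivial, sub_mulVec, dotProduct_sub, sub_nonneg] using hform
end

section
/- Let (ℓ_i)_{i≥0} be nonnegative reals satisfying ℓ_i ≤ 2·e^{10√(ℓ_{i−1})}·ℓ_{i−1} and ℓ_i ≥ (3/2)·ℓ_{i−1} for all i ≥ 1. Fix sufficiently small δ, γ with ℓ_0 ≤ γ ≤ δ (it suffices that 10·(3+√6)·√δ ≤ ln 2). Then for every integer k with 0 ≤ k ≤ log₂(1/γ) − log₂(2/δ), one has ℓ_k ≤ δ. -/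
/-- The analytic content of Lemma 2.5: if `ℓ (i+1) ≤ 2·e^{10√(ℓ i)}·ℓ i` and
`ℓ (i+1) ≥ (3/2)·ℓ i`, with `ℓ 0 ≤ γ ≤ δ` and `10(3+√6)√δ ≤ ln 2`, then
`ℓ k ≤ δ` for all `k ≤ log₂(1/γ) − log₂(2/δ)`. -/
theorem stmt_10 (ℓ : ℕ → ℝ) (hnonneg : ∀ i, 0 ≤ ℓ i)
    (hup : ∀ i, ℓ (i + 1) ≤ 2 * Real.exp (10 * Real.sqrt (ℓ i)) * ℓ i)
    (hlow : ∀ i, (3 / 2) * ℓ i ≤ ℓ (i + 1))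
    (δ γ : ℝ) (hγ0 : 0 < γ) (hγδ : γ ≤ δ)
    (hδsmall : 10 * (3 + Real.sqrt 6) * Real.sqrt δ ≤ Real.log 2)
    (hℓ0 : ℓ 0 ≤ γ) :
    ∀ k : ℕ, (k : ℝ) ≤ Real.logb 2 (1 / γ) - Real.logb 2 (2 / δ) → ℓ k ≤ δ := by
  have hδ0 : 0 < δ := lt_of_lt_of_le hγ0 hγδ
  set S : ℕ → ℝ := fun k => ∑ i ∈ Finset.range k, Real.sqrt (ℓ i) with hSdef
  -- Lemma A : iterated upper bound
  have hA : ∀ k, ℓ k ≤ 2 ^ k * Real.exp (10 * S k) * ℓ 0 := by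
    intro k
    induction k with
    | zero => simp [hSdef]
    | succ n ih =>
      calc ℓ (n + 1) ≤ 2 * Real.exp (10 * Real.sqrt (ℓ n)) * ℓ n := hup n
        _ ≤ 2 * Real.exp (10 * Real.sqrt (ℓ n)) * (2 ^ n * Real.exp (10 * S n) * ℓ 0) := by
            have h := Real.exp_pos (10 * Real.sqrt (ℓ n))
            nlinarith [ih, h.le]
        _ = 2 ^ (n + 1) * Real.exp (10 * S (n + 1)) * ℓ 0 := by
            simp only [hSdef, Finset.sum_range_succ, mul_add, Real.exp_add]
            ring
  -- √6 relation
  have h6 : Real.sqrt 6 = Real.sqrt (2 / 3) * 3 := by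
    rw [show (6 : ℝ) = (2 / 3) * 9 by norm_num,
      Real.sqrt_mul (by norm_num : (0:ℝ) ≤ 2/3),
      show (9 : ℝ) = 3 ^ 2 by norm_num, Real.sqrt_sq (by norm_num : (0:ℝ) ≤ 3)]
  have hs2 : Real.sqrt (2 / 3) ^ 2 = 2 / 3 := Real.sq_sqrt (by norm_num)
  have hs0 : 0 ≤ Real.sqrt (2 / 3) := Real.sqrt_nonneg _
  -- Lemma B : geometric sum bound
  have hB : ∀ k, S (k + 1) ≤ (3 + Real.sqrt 6) * Real.sqrt (ℓ k) := by
    intro k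
    induction k with
    | zero =>
      have := Real.sqrt_nonneg (ℓ 0)
      have := Real.sqrt_nonneg (6:ℝ)
      simp only [hSdef, Finset.sum_range_succ, Finset.sum_range_zero, zero_add]
      nlinarith
    | succ n ih =>
      have hstep : Real.sqrt (ℓ n) ≤ Real.sqrt (2 / 3) * Real.sqrt (ℓ (n + 1)) := by
        rw [← Real.sqrt_mul (by norm_num : (0:ℝ) ≤ 2/3)]
        apply Real.sqrt_le_sqrt
        nlinarith [hlow n]
      have hx : 0 ≤ Real.sqrt (ℓ (n + 1)) := Real.sqrt_nonneg _
      have hSsucc : S (n + 1 + 1) = S (n + 1) + Real.sqrt (ℓ (n + 1)) := by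
        simp [hSdef, Finset.sum_range_succ]
      rw [hSsucc, h6]
      rw [h6] at ih
      nlinarith [ih, hstep]
  intro k
  induction k with
  | zero => intro _; exact le_trans hℓ0 hγδ
  | succ n ih =>
    intro hk
    have hn : (n : ℝ) ≤ Real.logb 2 (1 / γ) - Real.logb 2 (2 / δ) := by
      push_cast at hk; linarith
    have hℓn : ℓ n ≤ δ := ih hn
    -- exponential factor ≤ 2
    have hSδ : S (n + 1) ≤ (3 + Real.sqrt 6) * Real.sqrt δ := by
      refine le_trans (hB n) ?_
      have h60 : (0:ℝ) ≤ 3 + Real.sqrt 6 := by positivity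
      exact mul_le_mul_of_nonneg_left (Real.sqrt_le_sqrt hℓn) h60
    have hexp : Real.exp (10 * S (n + 1)) ≤ 2 := by
      calc Real.exp (10 * S (n + 1)) ≤ Real.exp (Real.log 2) := by
            apply Real.exp_le_exp.mpr
            nlinarith [hSδ]
        _ = 2 := Real.exp_log two_pos
    -- power bound
    have hxpos : (0:ℝ) < δ / (2 * γ) := by positivity
    have hlogeq : Real.logb 2 (1 / γ) - Real.logb 2 (2 / δ) = Real.logb 2 (δ / (2 * γ)) := by
      rw [← Real.logb_div (by positivity) (by positivity)]
      congr 1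
      field_simp
    have hpow : (2:ℝ) ^ (n + 1) ≤ δ / (2 * γ) := by
      have h2 : (2:ℝ) ^ ((n + 1 : ℕ) : ℝ) ≤ δ / (2 * γ) := by
        calc (2:ℝ) ^ ((n + 1 : ℕ) : ℝ) ≤ (2:ℝ) ^ (Real.logb 2 (δ / (2 * γ))) := by
              apply Real.rpow_le_rpow_of_exponent_le one_le_two
              rw [← hlogeq]; exact_mod_cast hk
          _ = δ / (2 * γ) := Real.rpow_logb two_pos (by norm_num) hxpos
      rwa [Real.rpow_natCast] at h2
    calc ℓ (n + 1) ≤ 2 ^ (n + 1) * Real.exp (10 * S (n + 1)) * ℓ 0 := hA (n + 1)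
      _ ≤ (δ / (2 * γ)) * 2 * γ := by
          apply mul_le_mul _ (le_trans hℓ0 (le_refl γ)) (hnonneg 0) (by positivity)
          exact mul_le_mul hpow hexp (Real.exp_pos _).le hxpos.le
      _ = δ := by field_simp
end
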